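/- arXiv:1302.5588 — 2 statements merged into one kernel-verified Lean document; each statement's English description precedes it below -/
import Mathlib

section
/- Let X be an n-dimensional Euler complex with n odd. Then the Euler characteristic of X is zero, i.e., ∑_{k=0}^{n} (−1)^k š_k(X) = 0. -/
/-!
Counting pairs `σ ⊆ ρ` of faces with `σ` nonempty, with sign `(-1)^(|ρ| + |σ|)`, in two ways
gives `χ(X) = ∑_{σ ≠ ∅} (1 - χ(lk σ))` for every simplicial complex: summing over `σ ⊆ ρ` first
gives `-(-1)^|ρ|` for each nonempty `ρ`, while the cofaces of `σ` are the sets `σ ∪ τ` with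
`τ ∈ lk σ`. In an odd-dimensional Euler complex `1 - χ(lk σ) = -(-1)^(dim σ)`, so the right side
is `-χ(X)` and therefore `χ(X) = 0`.
-/

open Finset

/-- An abstract simplicial complex: a finite collection of finite sets closed under subsets. -/
def IsComplex {V : Type*} [DecidableEq V] (X : Finset (Finset V)) : Prop :=
  ∀ σ ∈ X, ∀ τ, τ ⊆ σ → τ ∈ X

/-- The link of a simplex `σ`: all `τ ∈ X` with `σ ∩ τ = ∅` and `σ ∪ τ ∈ X`. -/
def lk {V : Type*} [DecidableEq V] (X : Finset (Finset V)) (σ : Finset V) :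
    Finset (Finset V) :=
  X.filter (fun τ => σ ∩ τ = ∅ ∧ σ ∪ τ ∈ X)

/-- Euler characteristic: alternating sum over nonempty simplices of (-1)^(dimension). -/
def chi {V : Type*} [DecidableEq V] (Y : Finset (Finset V)) : ℤ :=
  ∑ τ ∈ Y.filter (· ≠ ∅), (-1 : ℤ) ^ (τ.card + 1)

/-- `X` is pure of dimension `n`: every maximal simplex has cardinality `n + 1`. -/
def IsPure {V : Type*} [DecidableEq V] (X : Finset (Finset V)) (n : ℕ) : Prop :=
  ∀ σ ∈ X, (∀ τ ∈ X, σ ⊆ τ → τ = σ) → σ.card = n + 1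

section EulerCharacteristic

variable {V : Type*} [DecidableEq V]

lemma sum_neg_one_pow_card_eq_one_sub_chi {Y : Finset (Finset V)} (hY : ∅ ∈ Y) :
    ∑ τ ∈ Y, (-1 : ℤ) ^ τ.card = 1 - chi Y := by
  rw [chi, filter_ne', sum_erase_eq_sub hY]
  simp only [pow_succ, mul_neg_one, sum_neg_distrib, card_empty, pow_zero]
  ring

lemma sum_lk_neg_one_pow_card {X : Finset (Finset V)} (hX : IsComplex X) (σ : Finset V) :
    ∑ τ ∈ lk X σ, (-1 : ℤ) ^ τ.card = ∑ ρ ∈ X with σ ⊆ ρ, (-1 : ℤ) ^ (ρ.card + σ.card) := by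
  refine sum_nbij' (σ ∪ ·) (· \ σ) ?_ ?_ ?_ ?_ ?_
  · intro τ hτ
    simp only [lk, mem_filter] at hτ ⊢
    exact ⟨hτ.2.2, subset_union_left⟩
  · intro ρ hρ
    simp only [lk, mem_filter] at hρ ⊢
    refine ⟨hX ρ hρ.1 _ sdiff_subset, inter_sdiff_self _ _, ?_⟩
    rw [union_sdiff_of_subset hρ.2]
    exact hρ.1
  · intro τ hτ
    simp only [lk, mem_filter] at hτ
    exact union_sdiff_cancel_left (disjoint_iff_inter_eq_empty.mpr hτ.2.1)
  · intro ρ hρ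
    simp only [mem_filter] at hρ
    exact union_sdiff_of_subset hρ.2
  · intro τ hτ
    simp only [lk, mem_filter] at hτ
    rw [card_union_of_disjoint (disjoint_iff_inter_eq_empty.mpr hτ.2.1), add_right_comm,
      ← two_mul, pow_add, pow_mul, neg_one_sq, one_pow, one_mul]

lemma sum_superset_neg_one_pow_eq_one_sub_chi_lk {X : Finset (Finset V)} (hX : IsComplex X)
    {σ : Finset V} (hσ : σ ∈ X) :
    ∑ ρ ∈ X with σ ⊆ ρ, (-1 : ℤ) ^ (ρ.card + σ.card) = 1 - chi (lk X σ) := by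
  have hempty : ∅ ∈ lk X σ := by
    simp [lk, hX σ hσ ∅ (empty_subset σ), hσ]
  rw [← sum_lk_neg_one_pow_card hX, sum_neg_one_pow_card_eq_one_sub_chi hempty]

lemma sum_nonempty_sum_superset_neg_one_pow {X : Finset (Finset V)} (hX : IsComplex X) :
    ∑ σ ∈ X with σ ≠ ∅, ∑ ρ ∈ X with σ ⊆ ρ, (-1 : ℤ) ^ (ρ.card + σ.card) = chi X := by
  rw [sum_comm' (t' := X) (s' := fun ρ => ρ.powerset.erase ∅)]
  · rw [chi, sum_filter]
    refine sum_congr rfl fun ρ _ => ?_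
    simp only [pow_add, ← mul_sum, sum_erase_eq_sub (empty_mem_powerset ρ),
      sum_powerset_neg_one_pow_card]
    split_ifs <;> simp_all [pow_succ]
  · intro σ ρ
    simp only [mem_filter, mem_erase, mem_powerset]
    constructor
    · rintro ⟨⟨_, hne⟩, hρ, hsub⟩
      exact ⟨⟨hne, hsub⟩, hρ⟩
    · rintro ⟨⟨hne, hsub⟩, hρ⟩
      exact ⟨⟨hX ρ hρ σ hsub, hne⟩, hρ, hsub⟩

theorem chi_eq_sum_one_sub_chi_lk {X : Finset (Finset V)} (hX : IsComplex X) :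
    chi X = ∑ σ ∈ X with σ ≠ ∅, (1 - chi (lk X σ)) := by
  rw [← sum_nonempty_sum_superset_neg_one_pow hX]
  exact sum_congr rfl fun σ hσ =>
    sum_superset_neg_one_pow_eq_one_sub_chi_lk hX (mem_filter.mp hσ).1

lemma chi_eq_sum_range {Y : Finset (Finset V)} {n : ℕ} (hY : ∀ σ ∈ Y, σ.card ≤ n + 1) :
    chi Y = ∑ k ∈ range (n + 1), (-1 : ℤ) ^ k * (#{σ ∈ Y | σ.card = k + 1} : ℤ) := by
  have hmaps : ∀ σ ∈ Y.filter (· ≠ ∅), σ.card - 1 ∈ range (n + 1) := by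
    intro σ hσ
    have := hY σ (mem_filter.mp hσ).1
    rw [mem_range]
    omega
  rw [chi, ← sum_fiberwise_of_maps_to hmaps]
  refine sum_congr rfl fun k _ => ?_
  have hfiber : {σ ∈ Y.filter (· ≠ ∅) | σ.card - 1 = k} = {σ ∈ Y | σ.card = k + 1} := by
    ext σ
    simp only [mem_filter, ne_eq, ← card_eq_zero, and_assoc]
    exact and_congr_right fun _ => by omega
  rw [hfiber, sum_congr rfl fun σ hσ => by rw [(mem_filter.mp hσ).2, pow_succ, pow_succ]]
  simp [mul_comm]

lemma card_le_of_isPure {X : Finset (Finset V)} {n : ℕ} (hpure : IsPure X n) {σ : Finset V}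
    (hσ : σ ∈ X) : σ.card ≤ n + 1 := by
  obtain ⟨τ, hστ, hmax⟩ := X.finite_toSet.exists_le_maximal hσ
  have hτ : τ.card = n + 1 :=
    hpure τ hmax.prop fun ρ hρ hτρ => (hmax.le_of_ge hρ hτρ).antisymm hτρ
  exact hτ ▸ card_le_card hστ

end EulerCharacteristic

lemma coe_neg_one_zpow_sub_sub_one {n : ℕ} (hn : Odd n) (k : ℕ) :
    (((-1 : ℤˣ) ^ ((n : ℤ) - k - 1) : ℤˣ) : ℤ) = (-1 : ℤ) ^ k := by
  rw [← Int.negOnePow_def, ← Int.coe_negOnePow_natCast, (Int.negOnePow_eq_iff _ _).mpr]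
  obtain ⟨m, rfl⟩ := hn
  exact ⟨m - k, by push_cast; ring⟩

/-- An odd-dimensional Euler complex has Euler characteristic zero. -/
theorem stmt6 {V : Type*} [DecidableEq V] (X : Finset (Finset V)) (n : ℕ)
    (hX : IsComplex X) (hpure : IsPure X n) (hodd : Odd n)
    (heuler : ∀ k : ℕ, ∀ σ ∈ X, σ.card = k + 1 →
      chi (lk X σ) = 1 + (((-1 : ℤˣ) ^ ((n : ℤ) - k - 1) : ℤˣ) : ℤ)) :
    ∑ k ∈ Finset.range (n + 1), (-1 : ℤ) ^ k *
        ((X.filter (fun σ => σ.card = k + 1)).card : ℤ) = 0 := by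
  have hlk : ∀ σ ∈ X, σ ≠ ∅ → 1 - chi (lk X σ) = -(-1) ^ (σ.card + 1) := by
    intro σ hσ hne
    obtain ⟨k, hk⟩ := Nat.exists_eq_add_one.mpr (card_pos.mpr (nonempty_iff_ne_empty.mpr hne))
    rw [heuler k σ hσ hk, coe_neg_one_zpow_sub_sub_one hodd, hk]
    ring
  have hchi : chi X = -chi X := by
    conv_lhs => rw [chi_eq_sum_one_sub_chi_lk hX]
    rw [chi, ← sum_neg_distrib]
    exact sum_congr rfl fun σ hσ => hlk σ (mem_filter.mp hσ).1 (mem_filter.mp hσ).2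
  rw [← chi_eq_sum_range fun σ hσ => card_le_of_isPure hpure hσ]
  linarith
end

section
/- Let X be an n-dimensional Euler complex. Then for every k with 0 ≤ k ≤ n−1, (1 + (−1)^k) š_k(X) = ∑_{l=k+1}^{n} (−1)^{l−k−1} C(l+1, k+1) š_l(X). -/
/-!
Fix `k`. For a `k`-simplex `σ`, the map `τ ↦ σ ∪ τ` identifies the nonempty faces of `Lk σ` with
the simplices `ρ ⊋ σ`, so `χ(Lk σ) = ∑_{ρ ⊋ σ} (-1)^(dim ρ - k - 1)`. Summing over all
`k`-simplices and counting the pairs `σ ⊂ ρ` from the side of `ρ`, each `l`-simplex contains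
`C(l+1, k+1)` of them, so `∑_σ χ(Lk σ) = ∑_l (-1)^(l-k-1) C(l+1, k+1) š_l(X)` in every pure
`n`-dimensional complex. The Euler condition evaluates the left side as `(1 + (-1)^k) š_k(X)`.
-/

open Finset

section

variable {V : Type*} {X : Finset (Finset V)}

/-- The `l`-simplices of `X`; their number is the paper's `š_l(X)`. -/
def faces (X : Finset (Finset V)) (l : ℕ) : Finset (Finset V) :=
  X.filter (fun σ => σ.card = l + 1)

@[simp]
theorem mem_faces {l : ℕ} {σ : Finset V} : σ ∈ faces X l ↔ σ ∈ X ∧ σ.card = l + 1 :=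
  mem_filter

variable [DecidableEq V]

theorem IsPure.card_le {n : ℕ} (hpure : IsPure X n) {σ : Finset V} (hσ : σ ∈ X) :
    σ.card ≤ n + 1 := by
  obtain ⟨τ, hτ, hτmax⟩ := {τ ∈ X | σ ⊆ τ}.exists_max_image card ⟨σ, by simp [hσ]⟩
  rw [mem_filter] at hτ
  have hmaximal : ∀ τ' ∈ X, τ ⊆ τ' → τ' = τ := fun τ' hτ' hsub =>
    (eq_of_subset_of_card_le hsub (hτmax τ' (mem_filter.2 ⟨hτ', hτ.2.trans hsub⟩))).symm
  exact (card_le_card hτ.2).trans (hpure τ hτ.1 hmaximal).le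

/-- `τ ↦ σ ∪ τ` identifies the nonempty simplices of the link with the strict cofaces of `σ`. -/
theorem chi_lk_eq_sum_ssuperset (hX : IsComplex X) (σ : Finset V) :
    chi (lk X σ) = ∑ ρ ∈ X with σ ⊂ ρ, (-1 : ℤ) ^ (ρ.card - σ.card + 1) := by
  unfold chi lk
  rw [filter_filter]
  refine sum_nbij' (σ ∪ ·) (· \ σ) ?_ ?_ ?_ ?_ ?_
  · simp only [mem_filter]
    rintro τ ⟨-, ⟨hdisj, hunion⟩, hne⟩
    obtain ⟨v, hv⟩ := nonempty_iff_ne_empty.2 hne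
    refine ⟨hunion, (ssubset_iff_of_subset subset_union_left).2 ⟨v, mem_union_right _ hv, ?_⟩⟩
    exact fun hvσ => notMem_empty v (hdisj ▸ mem_inter.2 ⟨hvσ, hv⟩)
  · simp only [mem_filter]
    rintro ρ ⟨hρ, hσρ⟩
    refine ⟨hX ρ hρ _ sdiff_subset, ⟨inter_sdiff_self σ ρ, ?_⟩, ?_⟩
    · rwa [union_sdiff_of_subset hσρ.subset]
    · exact nonempty_iff_ne_empty.1 (sdiff_nonempty.2 hσρ.not_subset)
  · intro τ hτ
    simp only [mem_filter] at hτ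
    exact union_sdiff_cancel_left (disjoint_iff_inter_eq_empty.2 hτ.2.1.1)
  · intro ρ hρ
    exact union_sdiff_of_subset (mem_filter.1 hρ).2.subset
  · intro τ hτ
    simp only [mem_filter] at hτ
    rw [card_union_of_disjoint (disjoint_iff_inter_eq_empty.2 hτ.2.1.1), Nat.add_sub_cancel_left]

theorem sum_ssuperset_eq_sum_faces {n k : ℕ} (hpure : IsPure X n) {σ : Finset V}
    (hσ : σ.card = k + 1) :
    ∑ ρ ∈ X with σ ⊂ ρ, (-1 : ℤ) ^ (ρ.card - σ.card + 1) =
      ∑ l ∈ Icc (k + 1) n, (-1 : ℤ) ^ (l - k - 1) * #{ρ ∈ faces X l | σ ⊆ ρ} := by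
  have hmaps : ∀ ρ ∈ {ρ ∈ X | σ ⊂ ρ}, ρ.card - 1 ∈ Icc (k + 1) n := by
    intro ρ hρ
    rw [mem_filter] at hρ
    have := card_lt_card hρ.2
    have := hpure.card_le hρ.1
    rw [mem_Icc]
    omega
  rw [← sum_fiberwise_of_maps_to hmaps]
  refine sum_congr rfl fun l hl => ?_
  rw [mem_Icc] at hl
  have hfiber : {ρ ∈ {ρ ∈ X | σ ⊂ ρ} | ρ.card - 1 = l} = {ρ ∈ faces X l | σ ⊆ ρ} := by
    ext ρ
    simp only [mem_filter, mem_faces]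
    constructor
    · rintro ⟨⟨hρ, hσρ⟩, hl'⟩
      have := card_lt_card hσρ
      exact ⟨⟨hρ, by omega⟩, hσρ.subset⟩
    · rintro ⟨⟨hρ, hcard⟩, hσρ⟩
      exact ⟨⟨hρ, ssubset_of_subset_of_ne hσρ (by rintro rfl; omega)⟩, by omega⟩
  rw [hfiber, sum_congr rfl fun ρ hρ => ?_, sum_const, nsmul_eq_mul, mul_comm]
  have hcard := (mem_faces.1 (mem_filter.1 hρ).1).2
  rw [hcard, hσ, show l + 1 - (k + 1) + 1 = (l - k - 1) + 2 by omega, pow_add]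
  simp

theorem card_faces_subset (hX : IsComplex X) {ρ : Finset V} (hρ : ρ ∈ X) (k : ℕ) :
    #{σ ∈ faces X k | σ ⊆ ρ} = ρ.card.choose (k + 1) := by
  rw [← card_powersetCard]
  congr 1
  ext σ
  simp only [mem_filter, mem_faces, mem_powersetCard]
  exact ⟨fun ⟨⟨_, hcard⟩, hsub⟩ => ⟨hsub, hcard⟩,
    fun ⟨hsub, hcard⟩ => ⟨⟨hX ρ hρ σ hsub, hcard⟩, hsub⟩⟩

/-- Double counting of the pairs `σ ⊂ ρ` with `σ` a `k`-simplex. -/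
theorem sum_chi_lk_faces {n : ℕ} (hX : IsComplex X) (hpure : IsPure X n) (k : ℕ) :
    ∑ σ ∈ faces X k, chi (lk X σ) =
      ∑ l ∈ Icc (k + 1) n, (-1 : ℤ) ^ (l - k - 1) * ((l + 1).choose (k + 1) : ℤ) *
        #(faces X l) := by
  calc ∑ σ ∈ faces X k, chi (lk X σ)
      = ∑ σ ∈ faces X k, ∑ l ∈ Icc (k + 1) n,
          (-1 : ℤ) ^ (l - k - 1) * #((faces X l).bipartiteAbove (· ⊆ ·) σ) := by
        refine sum_congr rfl fun σ hσ => ?_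
        rw [chi_lk_eq_sum_ssuperset hX, sum_ssuperset_eq_sum_faces hpure (mem_faces.1 hσ).2]
        rfl
    _ = ∑ l ∈ Icc (k + 1) n,
          (-1 : ℤ) ^ (l - k - 1) * ∑ ρ ∈ faces X l, #((faces X k).bipartiteBelow (· ⊆ ·) ρ) := by
        rw [sum_comm]
        refine sum_congr rfl fun l _ => ?_
        rw [← mul_sum, ← Nat.cast_sum, sum_card_bipartiteAbove_eq_sum_card_bipartiteBelow]
    _ = _ := by
        refine sum_congr rfl fun l _ => ?_
        have hchoose : ∀ ρ ∈ faces X l,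
            #((faces X k).bipartiteBelow (· ⊆ ·) ρ) = (l + 1).choose (k + 1) := fun ρ hρ => by
          rw [← (mem_faces.1 hρ).2]
          exact card_faces_subset hX (mem_faces.1 hρ).1 k
        rw [sum_congr rfl hchoose, sum_const, smul_eq_mul, Nat.cast_mul]
        ring

end

/-- (1 + (−1)^k) š_k(X) = ∑_{l=k+1}^{n} (−1)^{l−k−1} C(l+1,k+1) š_l(X) in an
Euler complex (links of k-simplices have Euler characteristic 1 + (−1)^k). -/
theorem stmt8 {V : Type*} [DecidableEq V] (X : Finset (Finset V)) (n : ℕ)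
    (hX : IsComplex X) (hpure : IsPure X n)
    (heuler : ∀ k : ℕ, ∀ σ ∈ X, σ.card = k + 1 →
      chi (lk X σ) = 1 + (-1 : ℤ) ^ k) :
    ∀ k : ℕ, k ≤ n - 1 → 1 ≤ n →
      (1 + (-1 : ℤ) ^ k) * ((X.filter (fun σ => σ.card = k + 1)).card : ℤ) =
        ∑ l ∈ Finset.Icc (k + 1) n, (-1 : ℤ) ^ (l - k - 1) *
          (Nat.choose (l + 1) (k + 1) : ℤ) *
          ((X.filter (fun τ => τ.card = l + 1)).card : ℤ) := by
  intro k _ _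
  refine Eq.trans ?_ (sum_chi_lk_faces hX hpure k)
  rw [sum_congr rfl fun σ hσ => heuler k σ (mem_faces.1 hσ).1 (mem_faces.1 hσ).2, sum_const,
    nsmul_eq_mul, mul_comm]
  rfl
end
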